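/- arXiv:1412.1711 — 2 statements merged into one kernel-verified Lean document; each statement's English description precedes it below -/
import Mathlib

section
/- Let (Ω, 𝔄, P) be a probability space, Λ ∈ L²(P; ℝ^k) with E[Λ] = 0, and suppose ℐ = E[ΛΛᵀ] is invertible. For β ≥ 0 and r ≥ 0, define the Hellinger mean square error of ψ ∈ L²(P; ℝ^k) as MSE_h(ψ; β, r) = E[|ψ|²] + 8βr²·λ_max(E[ψψᵀ]), where λ_max denotes the largest eigenvalue. Then ϱ̂ = ℐ⁻¹Λ minimizes MSE_h(·; β, r) over the set {ψ ∈ L²(P; ℝ^k) : E[ψ] = 0, E[ψΛᵀ] = I_k}, for every β ≥ 0 and r ≥ 0. -/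
open MeasureTheory

/-- The largest eigenvalue of a symmetric positive semidefinite real matrix,
as the supremum of its quadratic form over the unit sphere. -/
noncomputable def lambdaMax {k : ℕ} (A : Matrix (Fin k) (Fin k) ℝ) : ℝ :=
  sSup {t : ℝ | ∃ a : Fin k → ℝ, (∑ i, (a i) ^ 2) = 1 ∧
    t = ∑ i, ∑ j, a i * A i j * a j}

/-!
`ϱ̂ᵢ = ∑ⱼ (ℐ⁻¹)ᵢⱼ Λⱼ` satisfies `⟪ϱ̂ᵢ, Λₗ⟫ = δᵢₗ`, so for every admissible `ψ` each `ψᵢ - ϱ̂ᵢ`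
is orthogonal to `span Λ ∋ ϱ̂ⱼ`; that is, `ϱ̂ᵢ` is the orthogonal projection of `ψᵢ` onto `span Λ`.
By Pythagoras `‖∑ aᵢ ϱ̂ᵢ‖ ≤ ‖∑ aᵢ ψᵢ‖` for every `a`, i.e. the Gram matrix of `ϱ̂` is below that
of `ψ` in the Loewner order. Both the trace `E|ψ|²` and `λ_max(E[ψψᵀ])` are monotone for this order.
-/

open Matrix
open scoped InnerProductSpace

section InnerProductSpace

variable {E : Type*} [SeminormedAddCommGroup E] [InnerProductSpace ℝ E] {ι : Type*} [Fintype ι]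

lemma norm_sq_le_of_inner_sub_self_eq_zero {u v : E} (h : ⟪u - v, v⟫_ℝ = 0) :
    ‖v‖ ^ 2 ≤ ‖u‖ ^ 2 := by
  have hpyth := norm_add_sq_eq_norm_sq_add_norm_sq_real h
  rw [sub_add_cancel] at hpyth
  nlinarith [mul_self_nonneg ‖u - v‖]

lemma sum_mul_gram_mul_eq_norm_sq (v : ι → E) (a : ι → ℝ) :
    ∑ i, ∑ j, a i * gram ℝ v i j * a j = ‖∑ i, a i • v i‖ ^ 2 := by
  rw [← real_inner_self_eq_norm_sq, sum_inner]
  simp_rw [inner_sum, real_inner_smul_left, real_inner_smul_right, gram_apply]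
  exact Finset.sum_congr rfl fun i _ => Finset.sum_congr rfl fun j _ => by ring

lemma sum_mul_gram_mul_le_of_inner_sub_eq_zero {v w : ι → E}
    (h : ∀ i j, ⟪w i - v i, v j⟫_ℝ = 0) (a : ι → ℝ) :
    ∑ i, ∑ j, a i * gram ℝ v i j * a j ≤ ∑ i, ∑ j, a i * gram ℝ w i j * a j := by
  rw [sum_mul_gram_mul_eq_norm_sq, sum_mul_gram_mul_eq_norm_sq]
  refine norm_sq_le_of_inner_sub_self_eq_zero ?_
  rw [← Finset.sum_sub_distrib, sum_inner]
  refine Finset.sum_eq_zero fun i _ => ?_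
  rw [← smul_sub, inner_sum]
  refine Finset.sum_eq_zero fun j _ => ?_
  rw [real_inner_smul_left, real_inner_smul_right, h, mul_zero, mul_zero]

variable [DecidableEq ι]

lemma inner_sum_inv_gram_smul {Λ : ι → E} (hdet : IsUnit (gram ℝ Λ).det) (i l : ι) :
    ⟪∑ j, (gram ℝ Λ)⁻¹ i j • Λ j, Λ l⟫_ℝ = (1 : Matrix ι ι ℝ) i l := by
  simp_rw [sum_inner, real_inner_smul_left, ← nonsing_inv_mul _ hdet, mul_apply, gram_apply]

lemma inner_sub_sum_inv_gram_smul_eq_zero {Λ ψ : ι → E} (hdet : IsUnit (gram ℝ Λ).det)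
    (hψ : ∀ i j, ⟪ψ i, Λ j⟫_ℝ = (1 : Matrix ι ι ℝ) i j) (i j : ι) :
    ⟪ψ i - ∑ l, (gram ℝ Λ)⁻¹ i l • Λ l, ∑ l, (gram ℝ Λ)⁻¹ j l • Λ l⟫_ℝ = 0 := by
  rw [inner_sum]
  refine Finset.sum_eq_zero fun l _ => ?_
  rw [real_inner_smul_right, inner_sub_left, hψ, inner_sum_inv_gram_smul hdet, sub_self, mul_zero]

end InnerProductSpace

section LambdaMax

variable {ι : Type*} [Fintype ι]

lemma abs_le_one_of_sum_sq_eq_one {a : ι → ℝ} (ha : ∑ i, a i ^ 2 = 1) (i : ι) : |a i| ≤ 1 := by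
  rw [← sq_le_one_iff_abs_le_one, ← ha]
  exact Finset.single_le_sum (fun j _ => sq_nonneg (a j)) (Finset.mem_univ i)

lemma sum_mul_mul_le_sum_abs_of_sum_sq_eq_one (A : Matrix ι ι ℝ) {a : ι → ℝ}
    (ha : ∑ i, a i ^ 2 = 1) : ∑ i, ∑ j, a i * A i j * a j ≤ ∑ i, ∑ j, |A i j| := by
  refine Finset.sum_le_sum fun i _ => Finset.sum_le_sum fun j _ => ?_
  calc a i * A i j * a j ≤ |a i| * |A i j| * |a j| := by
        rw [← abs_mul, ← abs_mul]; exact le_abs_self _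
    _ ≤ 1 * |A i j| * 1 := by
        gcongr
        exacts [abs_le_one_of_sum_sq_eq_one ha i, abs_le_one_of_sum_sq_eq_one ha j]
    _ = |A i j| := by ring

lemma lambdaMax_le_lambdaMax {k : ℕ} {A B : Matrix (Fin k) (Fin k) ℝ}
    (h : ∀ a : Fin k → ℝ, ∑ i, a i ^ 2 = 1 →
      ∑ i, ∑ j, a i * A i j * a j ≤ ∑ i, ∑ j, a i * B i j * a j) :
    lambdaMax A ≤ lambdaMax B := by
  by_cases hsphere : ∃ a : Fin k → ℝ, ∑ i, a i ^ 2 = 1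
  · obtain ⟨a₀, ha₀⟩ := hsphere
    refine csSup_le ⟨_, a₀, ha₀, rfl⟩ ?_
    rintro _ ⟨a, ha, rfl⟩
    refine (h a ha).trans (le_csSup ?_ ⟨a, ha, rfl⟩)
    refine ⟨∑ i, ∑ j, |B i j|, ?_⟩
    rintro _ ⟨b, hb, rfl⟩
    exact sum_mul_mul_le_sum_abs_of_sum_sq_eq_one B hb
  · push Not at hsphere
    simp [lambdaMax, hsphere]

end LambdaMax

namespace MeasureTheory.L2

variable {Ω : Type*} [MeasurableSpace Ω] {P : Measure Ω}

lemma integral_mul_eq_inner (f g : Lp ℝ 2 P) : ∫ x, f x * g x ∂P = ⟪f, g⟫_ℝ := by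
  simp [inner_def, mul_comm]

lemma of_integral_mul_eq_gram {ι : Type*} (f : ι → Lp ℝ 2 P) :
    (Matrix.of fun i j => ∫ x, f i x * f j x ∂P) = gram ℝ f := by
  ext i j
  exact integral_mul_eq_inner _ _

lemma integral_sum_sq_eq_sum_norm_sq {ι : Type*} [Fintype ι] (f : ι → Lp ℝ 2 P) :
    ∫ x, ∑ i, f i x ^ 2 ∂P = ∑ i, ‖f i‖ ^ 2 := by
  rw [integral_finsetSum _ fun i _ => by simpa [sq] using integrable_inner (𝕜 := ℝ) (f i) (f i)]
  simp_rw [sq, integral_mul_eq_inner, real_inner_self_eq_norm_mul_norm]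

end MeasureTheory.L2

theorem classical_ic_minimizes_hellinger_mse_general
    {Ω : Type*} [MeasurableSpace Ω] (P : Measure Ω)
    (k : ℕ) (Λ : Fin k → Lp ℝ 2 P)
    (ℐ : Matrix (Fin k) (Fin k) ℝ)
    (hI : ∀ i j, ℐ i j = ∫ x, Λ i x * Λ j x ∂P)
    (hIinv : IsUnit ℐ.det)
    (ϱhat : Fin k → Lp ℝ 2 P)
    (hϱhat : ∀ i, ϱhat i = ∑ j, ℐ⁻¹ i j • Λ j) :
    ∀ β r : ℝ, 0 ≤ β → 0 ≤ r →
    ∀ ψ : Fin k → Lp ℝ 2 P,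
      (∀ i, ∫ x, ψ i x ∂P = 0) →
      (∀ i j, (∫ x, ψ i x * Λ j x ∂P) = if i = j then 1 else 0) →
      (∫ x, ∑ i, (ϱhat i x) ^ 2 ∂P) +
          8 * β * r ^ 2 * lambdaMax (Matrix.of fun i j => ∫ x, ϱhat i x * ϱhat j x ∂P) ≤
        (∫ x, ∑ i, (ψ i x) ^ 2 ∂P) +
          8 * β * r ^ 2 * lambdaMax (Matrix.of fun i j => ∫ x, ψ i x * ψ j x ∂P) := by
  intro β r hβ hr ψ _ hψΛ
  obtain rfl : ℐ = gram ℝ Λ := by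
    ext i j
    rw [hI, gram_apply, L2.integral_mul_eq_inner]
  obtain rfl : ϱhat = fun i => ∑ j, (gram ℝ Λ)⁻¹ i j • Λ j := funext hϱhat
  have horth := inner_sub_sum_inv_gram_smul_eq_zero hIinv (ψ := ψ) fun i j => by
    rw [← L2.integral_mul_eq_inner, hψΛ, one_apply]
  rw [L2.of_integral_mul_eq_gram, L2.of_integral_mul_eq_gram,
    L2.integral_sum_sq_eq_sum_norm_sq, L2.integral_sum_sq_eq_sum_norm_sq]
  refine add_le_add (Finset.sum_le_sum fun i _ => norm_sq_le_of_inner_sub_self_eq_zero (horth i i))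
    (mul_le_mul_of_nonneg_left ?_ (by positivity))
  exact lambdaMax_le_lambdaMax fun a _ => sum_mul_gram_mul_le_of_inner_sub_eq_zero horth a

/-- the classical influence curve `ϱ̂ = ℐ⁻¹Λ` minimizes the
Hellinger mean square error `MSE_h(ψ; β, r) = E[|ψ|²] + 8βr²·λ_max(E[ψψᵀ])`
among all influence curves, for every `β ≥ 0` and `r ≥ 0`. -/
theorem classical_ic_minimizes_hellinger_mse
    {Ω : Type*} [MeasurableSpace Ω] (P : Measure Ω) [IsProbabilityMeasure P]
    (k : ℕ) (Λ : Fin k → Lp ℝ 2 P) (hcent : ∀ i, ∫ x, Λ i x ∂P = 0)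
    (ℐ : Matrix (Fin k) (Fin k) ℝ)
    (hI : ∀ i j, ℐ i j = ∫ x, Λ i x * Λ j x ∂P)
    (hIinv : IsUnit ℐ.det)
    (ϱhat : Fin k → Lp ℝ 2 P)
    (hϱhat : ∀ i, ϱhat i = ∑ j, ℐ⁻¹ i j • Λ j) :
    ∀ β r : ℝ, 0 ≤ β → 0 ≤ r →
    ∀ ψ : Fin k → Lp ℝ 2 P,
      (∀ i, ∫ x, ψ i x ∂P = 0) →
      (∀ i j, (∫ x, ψ i x * Λ j x ∂P) = if i = j then 1 else 0) →
      (∫ x, ∑ i, (ϱhat i x) ^ 2 ∂P) +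
          8 * β * r ^ 2 * lambdaMax (Matrix.of fun i j => ∫ x, ϱhat i x * ϱhat j x ∂P) ≤
        (∫ x, ∑ i, (ψ i x) ^ 2 ∂P) +
          8 * β * r ^ 2 * lambdaMax (Matrix.of fun i j => ∫ x, ψ i x * ψ j x ∂P) :=
  classical_ic_minimizes_hellinger_mse_general P k Λ ℐ hI hIinv ϱhat hϱhat
end

section
/- Let (Ω, 𝔄, P) be a probability space and r > 0. Define the tangent balls G_h(r) = {g ∈ L²(P) : E[g] = 0, E[g²] ≤ 8r²}, G_v(r) = {g ∈ L²(P) : E[g] = 0, E[|g|] ≤ 2r}, and G_c(r) = {g ∈ L²(P) : E[g] = 0, g ≥ −r P-a.e.}. Then for each ∗ ∈ {h, v, c}, the set of bounded elements G_∗(r) ∩ L^∞(P) is dense in G_∗(r) with respect to the L²(P) norm; that is, the closure of G_∗(r) ∩ L^∞(P) in L²(P) equals G_∗(r). -/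
/-!
Each ball is closed in `L²`, so only the density of its bounded elements needs proof.

For the Hellinger and total-variation balls the constraint is a sublevel set of a continuous,
positively homogeneous functional on the closed subspace of centred functions. Shrinking `g` to
`t • g` with `t < 1` moves it into the open sublevel set, inside which the centred bounded
functions (recentred simple functions) are dense.

The contamination constraint `g ≥ -r` is not open. Instead `g` is truncated from above at level
`c` and recentred: truncation lowers the mean, so recentring raises the function and keeps it
above `-r`, and the result tends to `g` as `c → ∞`.
-/

open MeasureTheory Filter Topology Set
open scoped ENNReal

section Homogeneous

variable {E : Type*} [AddCommGroup E] [Module ℝ E] [TopologicalSpace E] [ContinuousSMul ℝ E]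

theorem closure_sublevel_inter_eq_of_homogeneous {M : Submodule ℝ E} (hM : IsClosed (M : Set E))
    {S : Set E} (hS : (M : Set E) ⊆ closure (M ∩ S)) {φ : E → ℝ} (hφ : Continuous φ) {k : ℕ}
    (hk : k ≠ 0) (hhom : ∀ t : ℝ, 0 ≤ t → ∀ x, φ (t • x) = t ^ k * φ x) {c : ℝ} (hc : 0 < c) :
    closure ({x ∈ M | φ x ≤ c} ∩ S) = {x ∈ M | φ x ≤ c} := by
  have hclosed : IsClosed {x ∈ M | φ x ≤ c} := hM.inter (isClosed_le hφ continuous_const)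
  refine (closure_minimal inter_subset_left hclosed).antisymm fun x ⟨hxM, hxc⟩ => ?_
  have hlim : Tendsto (fun t : ℝ => t • x) (𝓝[<] 1) (𝓝 x) := by
    simpa using (tendsto_nhdsWithin_of_tendsto_nhds (tendsto_id (x := 𝓝 (1 : ℝ)))).smul_const x
  have hscaled : ∀ᶠ t in 𝓝[<] (1 : ℝ), t • x ∈ closure ({x ∈ M | φ x ≤ c} ∩ S) := by
    filter_upwards [Ioo_mem_nhdsLT zero_lt_one] with t ⟨ht0, ht1⟩
    have hlt : φ (t • x) < c := by
      rw [hhom t ht0.le]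
      calc t ^ k * φ x ≤ t ^ k * c := by gcongr
        _ < c := mul_lt_of_lt_one_left hc (pow_lt_one₀ ht0.le ht1 hk)
    have htxM : t • x ∈ M := M.smul_mem t hxM
    refine closure_mono ?_ ((isOpen_lt hφ continuous_const).inter_closure ⟨hlt, hS htxM⟩)
    rintro y ⟨hy, hyM, hyS⟩
    exact ⟨⟨hyM, hy.le⟩, hyS⟩
  simpa using mem_closure_of_tendsto hlim hscaled

end Homogeneous

theorem abs_sub_min_le_abs_sub {a b c : ℝ} (hbc : b ≤ c) : |a - min a c| ≤ |a - b| := by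
  rcases le_total a c with hac | hca
  · simp [min_eq_left hac]
  · rw [min_eq_right hca, abs_of_nonneg (by linarith), abs_of_nonneg (by linarith)]
    linarith

namespace MeasureTheory

variable {α : Type*} [MeasurableSpace α] {μ : Measure α}

theorem Lp.dense_setOf_ae_norm_le {E : Type*} [NormedAddCommGroup E] {p : ℝ≥0∞} [Fact (1 ≤ p)]
    (hp : p ≠ ∞) : Dense {g : Lp E p μ | ∃ C, ∀ᵐ x ∂μ, ‖g x‖ ≤ C} := by
  refine (Lp.simpleFunc.dense hp).mono fun g hg => ?_
  obtain ⟨C, hC⟩ := (Lp.simpleFunc.toSimpleFunc ⟨g, hg⟩).exists_forall_norm_le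
  exact ⟨C, (Lp.simpleFunc.toSimpleFunc_eq_toFun ⟨g, hg⟩).mono fun x hx => hx ▸ hC x⟩

theorem Lp.tendsto_inf_const_atTop [IsFiniteMeasure μ] {p : ℝ≥0∞} [Fact (1 ≤ p)] (hp : p ≠ ∞)
    (g : Lp ℝ p μ) : Tendsto (fun c : ℝ => g ⊓ Lp.const p μ c) atTop (𝓝 g) := by
  refine Metric.tendsto_atTop.2 fun ε hε => ?_
  obtain ⟨b, ⟨C, hC⟩, hb⟩ :=
    (dense_setOf_ae_norm_le (E := ℝ) (μ := μ) hp).exists_mem_open Metric.isOpen_ball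
      (Metric.nonempty_ball (x := g).2 hε)
  refine ⟨C, fun c hc => lt_of_le_of_lt ?_ (Metric.mem_ball'.1 hb)⟩
  rw [dist_eq_norm', dist_comm, dist_eq_norm']
  refine Lp.norm_le_norm_of_ae_le ?_
  filter_upwards [Lp.coeFn_sub g (g ⊓ Lp.const p μ c), Lp.coeFn_sub g b,
    Lp.coeFn_inf g (Lp.const p μ c), Lp.coeFn_const p μ c, hC] with x hgc hgb hinf hconst hCx
  rw [hgc, hgb, Pi.sub_apply, Pi.sub_apply, hinf, Pi.inf_apply, hconst, Function.const_apply,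
    Real.norm_eq_abs, Real.norm_eq_abs]
  exact abs_sub_min_le_abs_sub (((le_abs_self _).trans hCx).trans hc)

theorem Lp.isClosed_setOf_ae_const_le [IsFiniteMeasure μ] {p : ℝ≥0∞} [Fact (1 ≤ p)] (c : ℝ) :
    IsClosed {g : Lp ℝ p μ | ∀ᵐ x ∂μ, c ≤ g x} := by
  have hset : {g : Lp ℝ p μ | ∀ᵐ x ∂μ, c ≤ g x} = {g | Lp.const p μ c ≤ g} := by
    ext g
    change (∀ᵐ x ∂μ, c ≤ g x) ↔ Lp.const p μ c ≤ g
    rw [← Lp.coeFn_le]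
    exact eventually_congr ((Lp.coeFn_const p μ c).mono fun x hx => by rw [hx]; rfl)
  rw [hset]
  exact isClosed_le continuous_const continuous_id

namespace L2

theorem integral_eq_inner_const_one [IsFiniteMeasure μ] (f : Lp ℝ 2 μ) :
    ∫ x, f x ∂μ = inner ℝ (Lp.const 2 μ (1 : ℝ)) f := by
  rw [← indicatorConstLp_univ, inner_indicatorConstLp_one, Measure.restrict_univ]

theorem continuous_integral [IsFiniteMeasure μ] : Continuous fun f : Lp ℝ 2 μ => ∫ x, f x ∂μ := by
  simp only [integral_eq_inner_const_one]
  exact (innerSL ℝ _).continuous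

theorem continuous_integral_abs [IsFiniteMeasure μ] :
    Continuous fun f : Lp ℝ 2 μ => ∫ x, |f x| ∂μ :=
  (continuous_integral.comp (continuous_id.sup continuous_neg :
    Continuous fun f : Lp ℝ 2 μ => |f|)).congr fun f => integral_congr_ae (Lp.coeFn_abs f)

theorem integral_abs_smul (t : ℝ) (f : Lp ℝ 2 μ) : ∫ x, |(t • f) x| ∂μ = |t| * ∫ x, |f x| ∂μ := by
  rw [← integral_const_mul]
  refine integral_congr_ae ?_
  filter_upwards [Lp.coeFn_smul t f] with x hx
  simp [hx, abs_mul]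

theorem integral_sq_eq_norm_sq (f : Lp ℝ 2 μ) : ∫ x, f x ^ 2 ∂μ = ‖f‖ ^ 2 := by
  rw [← real_inner_self_eq_norm_sq, L2.inner_def]
  simp [sq]

section

variable (μ)

noncomputable def meanZero [IsFiniteMeasure μ] : Submodule ℝ (Lp ℝ 2 μ) :=
  LinearMap.ker (innerSL ℝ (Lp.const 2 μ (1 : ℝ)) : Lp ℝ 2 μ →ₗ[ℝ] ℝ)

def hellingerTangentBall (r : ℝ) : Set (Lp ℝ 2 μ) :=
  {g | ∫ x, g x ∂μ = 0 ∧ ∫ x, g x ^ 2 ∂μ ≤ 8 * r ^ 2}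

def tvTangentBall (r : ℝ) : Set (Lp ℝ 2 μ) :=
  {g | ∫ x, g x ∂μ = 0 ∧ ∫ x, |g x| ∂μ ≤ 2 * r}

def contaminationTangentBall (r : ℝ) : Set (Lp ℝ 2 μ) :=
  {g | ∫ x, g x ∂μ = 0 ∧ ∀ᵐ x ∂μ, -r ≤ g x}

def essBounded : Set (Lp ℝ 2 μ) := {g | ∃ C, ∀ᵐ x ∂μ, |g x| ≤ C}

end

theorem mem_meanZero [IsFiniteMeasure μ] {f : Lp ℝ 2 μ} : f ∈ meanZero μ ↔ ∫ x, f x ∂μ = 0 := by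
  simp [meanZero, integral_eq_inner_const_one]

theorem isClosed_meanZero [IsFiniteMeasure μ] : IsClosed (meanZero μ : Set (Lp ℝ 2 μ)) :=
  (innerSL ℝ (Lp.const 2 μ (1 : ℝ))).isClosed_ker

variable [IsProbabilityMeasure μ]

noncomputable def center (f : Lp ℝ 2 μ) : Lp ℝ 2 μ := f - Lp.const 2 μ (∫ x, f x ∂μ)

theorem coeFn_center (f : Lp ℝ 2 μ) : center f =ᵐ[μ] fun x => f x - ∫ x, f x ∂μ := by
  filter_upwards [Lp.coeFn_sub f (Lp.const 2 μ (∫ x, f x ∂μ)), Lp.coeFn_const 2 μ (∫ x, f x ∂μ)]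
    with x hsub hconst
  rw [center, hsub, Pi.sub_apply, hconst, Function.const_apply]

theorem continuous_center : Continuous (center : Lp ℝ 2 μ → Lp ℝ 2 μ) :=
  continuous_id.sub ((Lp.constL 2 μ ℝ).continuous.comp continuous_integral)

theorem integral_center (f : Lp ℝ 2 μ) : ∫ x, center f x ∂μ = 0 := by
  rw [integral_congr_ae (coeFn_center f), integral_sub ((Lp.memLp f).integrable one_le_two)
    (integrable_const _)]
  simp

theorem center_eq_self {f : Lp ℝ 2 μ} (hf : ∫ x, f x ∂μ = 0) : center f = f := by
  simp [center, hf]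

theorem ae_abs_center_le {f : Lp ℝ 2 μ} {C : ℝ} (hf : ∀ᵐ x ∂μ, |f x| ≤ C) :
    ∀ᵐ x ∂μ, |center f x| ≤ C + |∫ x, f x ∂μ| := by
  filter_upwards [coeFn_center f, hf] with x hx hCx
  rw [hx]
  exact (abs_sub _ _).trans (by linarith)

theorem meanZero_subset_closure_inter_essBounded :
    (meanZero μ : Set (Lp ℝ 2 μ)) ⊆ closure (meanZero μ ∩ essBounded μ) := by
  intro g hg
  rw [SetLike.mem_coe, mem_meanZero] at hg
  rw [← center_eq_self hg]
  refine map_mem_closure continuous_center (Lp.dense_setOf_ae_norm_le ENNReal.ofNat_ne_top g) ?_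
  rintro f ⟨C, hC⟩
  exact ⟨mem_meanZero.2 (integral_center f), _, ae_abs_center_le hC⟩

theorem closure_hellingerTangentBall_inter_essBounded {r : ℝ} (hr : 0 < r) :
    closure (hellingerTangentBall μ r ∩ essBounded μ) = hellingerTangentBall μ r := by
  have hball : hellingerTangentBall μ r = {g ∈ meanZero μ | ‖g‖ ^ 2 ≤ 8 * r ^ 2} := by
    ext g
    exact and_congr mem_meanZero.symm (by rw [integral_sq_eq_norm_sq])
  rw [hball]
  refine closure_sublevel_inter_eq_of_homogeneous isClosed_meanZero
    meanZero_subset_closure_inter_essBounded (φ := fun g => ‖g‖ ^ 2) (by fun_prop) two_ne_zero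
    (fun t ht g => ?_) (by positivity)
  rw [norm_smul, Real.norm_of_nonneg ht, mul_pow]

theorem closure_tvTangentBall_inter_essBounded {r : ℝ} (hr : 0 < r) :
    closure (tvTangentBall μ r ∩ essBounded μ) = tvTangentBall μ r := by
  have hball : tvTangentBall μ r = {g ∈ meanZero μ | ∫ x, |g x| ∂μ ≤ 2 * r} := by
    ext g
    exact and_congr mem_meanZero.symm Iff.rfl
  rw [hball]
  refine closure_sublevel_inter_eq_of_homogeneous isClosed_meanZero
    meanZero_subset_closure_inter_essBounded continuous_integral_abs one_ne_zero
    (fun t ht g => ?_) (by positivity)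
  rw [integral_abs_smul, abs_of_nonneg ht, pow_one]

theorem center_inf_const_mem_contaminationTangentBall {r c : ℝ} (hrc : -r ≤ c) {g : Lp ℝ 2 μ}
    (hg : g ∈ contaminationTangentBall μ r) :
    center (g ⊓ Lp.const 2 μ c) ∈ contaminationTangentBall μ r ∩ essBounded μ := by
  set h := g ⊓ Lp.const 2 μ c
  have hmin : h =ᵐ[μ] fun x => min (g x) c := by
    filter_upwards [Lp.coeFn_inf g (Lp.const 2 μ c), Lp.coeFn_const 2 μ c] with x hinf hconst
    rw [hinf, Pi.inf_apply, hconst, Function.const_apply]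
  have hlow : ∀ᵐ x ∂μ, -r ≤ h x := by
    filter_upwards [hmin, hg.2] with x hx hgx
    exact hx ▸ le_min hgx hrc
  have hmean : ∫ x, h x ∂μ ≤ 0 := by
    refine (integral_mono_ae ((Lp.memLp h).integrable one_le_two)
      ((Lp.memLp g).integrable one_le_two) ?_).trans_eq hg.1
    filter_upwards [hmin] with x hx
    exact hx ▸ min_le_left _ _
  refine ⟨⟨integral_center h, ?_⟩, |c| + |r| + |∫ x, h x ∂μ|, ae_abs_center_le ?_⟩
  · filter_upwards [coeFn_center h, hlow] with x hx hhx
    rw [hx]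
    linarith
  · filter_upwards [hmin, hlow] with x hx hhx
    rw [abs_le]
    constructor
    · linarith [neg_abs_le c, le_abs_self r, abs_nonneg c]
    · linarith [hx ▸ min_le_right (g x) c, le_abs_self c, abs_nonneg r]

theorem closure_contaminationTangentBall_inter_essBounded (r : ℝ) :
    closure (contaminationTangentBall μ r ∩ essBounded μ) = contaminationTangentBall μ r := by
  have hclosed : IsClosed (contaminationTangentBall μ r) :=
    (isClosed_singleton.preimage continuous_integral).inter (Lp.isClosed_setOf_ae_const_le (-r))
  refine (closure_minimal inter_subset_left hclosed).antisymm fun g hg => ?_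
  have hlim : Tendsto (fun c : ℝ => center (g ⊓ Lp.const 2 μ c)) atTop (𝓝 (center g)) :=
    (continuous_center.tendsto g).comp (Lp.tendsto_inf_const_atTop ENNReal.ofNat_ne_top g)
  rw [center_eq_self hg.1] at hlim
  exact mem_closure_of_tendsto hlim ((eventually_ge_atTop (-r)).mono fun c hc =>
    center_inf_const_mem_contaminationTangentBall hc hg)

end L2

end MeasureTheory

/-- for each of the Hellinger, total variation and contamination
tangent balls `G_*(r)` in `L²(P)`, the essentially bounded elements are dense:
the `L²`-closure of `G_*(r) ∩ L^∞(P)` equals `G_*(r)`. -/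
theorem tangent_balls_bounded_elements_dense
    {Ω : Type*} [MeasurableSpace Ω] (P : Measure Ω) [IsProbabilityMeasure P]
    (r : ℝ) (hr : 0 < r)
    (Gh Gv Gc : Set (Lp ℝ 2 P))
    (hGh : Gh = {g : Lp ℝ 2 P | (∫ x, g x ∂P) = 0 ∧ (∫ x, (g x) ^ 2 ∂P) ≤ 8 * r ^ 2})
    (hGv : Gv = {g : Lp ℝ 2 P | (∫ x, g x ∂P) = 0 ∧ (∫ x, |g x| ∂P) ≤ 2 * r})
    (hGc : Gc = {g : Lp ℝ 2 P | (∫ x, g x ∂P) = 0 ∧ ∀ᵐ x ∂P, -r ≤ g x})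
    (B : Set (Lp ℝ 2 P))
    (hB : B = {g : Lp ℝ 2 P | ∃ C : ℝ, ∀ᵐ x ∂P, |g x| ≤ C}) :
    closure (Gh ∩ B) = Gh ∧ closure (Gv ∩ B) = Gv ∧ closure (Gc ∩ B) = Gc := by
  subst hGh hGv hGc hB
  exact ⟨L2.closure_hellingerTangentBall_inter_essBounded hr,
    L2.closure_tvTangentBall_inter_essBounded hr,
    L2.closure_contaminationTangentBall_inter_essBounded r⟩
end
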